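/- arXiv:2512.04058 — 8 statements merged into one kernel-verified Lean document; each statement's English description precedes it below -/
import Mathlib

section
/- Let Q be a probability distribution on finite variables A,B,C,D,E,F with F = (F_O, F_S), factorizing as Q(a,b,c,d,e,f) = Q(a)Q(b)Q(c)Q(d|b,c)Q(e|a,c,d)Q(f|a,b). Suppose additionally that F_S = E almost surely and that E is independent of (C,D), i.e., Q(e|c,d) = Q(e) whenever Q(c,d) > 0. Then the observed marginal satisfies P(c,d,e,f_O) = \sum_b Q(b)Q(c)Q(d|b,c)Q(e)Q(f_O|b,e) for all c,d,e,f_O (whenever the conditionals appearing are well-defined). -/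
private lemma sum_mul_one' {α : Type*} [Fintype α] (X : ℝ) (g : α → ℝ)
    (hg : ∑ x, g x = 1) : (∑ x, X * g x) = X := by
  rw [← Finset.mul_sum, hg, mul_one]

private lemma sum_pull {α : Type*} [Fintype α] (k : ℝ) (g : α → ℝ) :
    (∑ x, k * g x) = k * ∑ x, g x := (Finset.mul_sum _ _ _).symm

/-- Lemma 1 of the paper: for the factorized distribution on `G₁`
with `F = (F_O, F_S)`, `F_S = E` almost surely, and `E` independent of `(C,D)`,
the observed marginal takes Bell's local-causality form
`P(c,d,e,f_O) = ∑_b Q(b)Q(c)Q(d|b,c)Q(e)Q(f_O|b,e)`. -/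
theorem stmt_3 {A B C D E FO : Type} [Fintype A] [Fintype B] [Fintype C]
    [Fintype D] [Fintype E] [Fintype FO]
    (pA : A → ℝ) (pB : B → ℝ) (pC : C → ℝ)
    (kD : B → C → D → ℝ) (kE : A → C → D → E → ℝ) (kF : A → B → FO × E → ℝ)
    (hpA0 : ∀ a, 0 ≤ pA a) (hpA1 : ∑ a, pA a = 1)
    (hpB0 : ∀ b, 0 ≤ pB b) (hpB1 : ∑ b, pB b = 1)
    (hpC0 : ∀ c, 0 ≤ pC c) (hpC1 : ∑ c, pC c = 1)
    (hkD0 : ∀ b c d, 0 ≤ kD b c d) (hkD1 : ∀ b c, ∑ d, kD b c d = 1)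
    (hkE0 : ∀ a c d e, 0 ≤ kE a c d e) (hkE1 : ∀ a c d, ∑ e, kE a c d e = 1)
    (hkF0 : ∀ a b f, 0 ≤ kF a b f) (hkF1 : ∀ a b, ∑ f, kF a b f = 1)
    (Q : A → B → C → D → E → FO × E → ℝ)
    (hQ : ∀ a b c d e f,
      Q a b c d e f = pA a * pB b * pC c * kD b c d * kE a c d e * kF a b f)
    -- Condition 1: `F_S = E` almost surely
    (hFS : ∀ a b c d e f₀ fS, fS ≠ e → Q a b c d e (f₀, fS) = 0)
    -- Condition 2: `Q(e|c,d) = Q(e)` whenever `Q(c,d) > 0`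
    (hEind : ∀ c d e, (∑ a, ∑ b, ∑ e', ∑ f, Q a b c d e' f) > 0 →
      (∑ a, ∑ b, ∑ f, Q a b c d e f) / (∑ a, ∑ b, ∑ e', ∑ f, Q a b c d e' f) =
      ∑ a, ∑ b, ∑ c', ∑ d', ∑ f, Q a b c' d' e f) :
    ∀ c d e f₀,
      (∑ a, ∑ b, ∑ fS, Q a b c d e (f₀, fS)) =
      ∑ b, pB b * pC c * kD b c d *
        (∑ a, ∑ b', ∑ c', ∑ d', ∑ f, Q a b' c' d' e f) *
        ((∑ a, ∑ c', ∑ d', ∑ fS, Q a b c' d' e (f₀, fS)) /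
          (∑ a, ∑ c', ∑ d', ∑ f, Q a b c' d' e f)) := by
  intro c d e f₀
  classical
  -- abbreviation for the "history" kernel
  set H : A → B → ℝ := fun a b => ∑ c', ∑ d', pC c' * kD b c' d' * kE a c' d' e
    with hHdef
  have hH0 : ∀ a b, 0 ≤ H a b := by
    intro a b
    apply Finset.sum_nonneg; intro c' _
    apply Finset.sum_nonneg; intro d' _
    have := hpC0 c'; have := hkD0 b c' d'; have := hkE0 a c' d' e
    positivity
  have hHval : ∀ a b, H a b = ∑ c', ∑ d', pC c' * kD b c' d' * kE a c' d' e :=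
    fun a b => rfl
  -- `V c' d'` : unnormalized conditional of `e` given `(c',d')`
  set V : C → D → ℝ := fun c' d' => ∑ a, pA a * kE a c' d' e with hVdef
  -- the marginal of `e`
  set M : ℝ := ∑ a, ∑ b', ∑ c', ∑ d', ∑ f, Q a b' c' d' e f with hMdef
  -- collapse the `fS` sums using Condition 1
  have hFSsum : ∀ a b' c' d', (∑ fS, Q a b' c' d' e (f₀, fS)) = Q a b' c' d' e (f₀, e) := by
    intro a b' c' d'
    exact Finset.sum_eq_single_of_mem e (Finset.mem_univ e)
      (fun fS _ hne => hFS a b' c' d' e f₀ fS hne)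
  -- factored form of inner triple sums
  have inner1 : ∀ a b', (∑ c', ∑ d', ∑ f, Q a b' c' d' e f) = pA a * pB b' * H a b' := by
    intro a b'
    rw [hHval]
    rw [Finset.mul_sum]
    refine Finset.sum_congr rfl fun c' _ => ?_
    rw [Finset.mul_sum]
    refine Finset.sum_congr rfl fun d' _ => ?_
    calc (∑ f, Q a b' c' d' e f)
        = ∑ f, (pA a * pB b' * pC c' * kD b' c' d' * kE a c' d' e) * kF a b' f := by
          refine Finset.sum_congr rfl fun f _ => ?_; rw [hQ]
      _ = pA a * pB b' * pC c' * kD b' c' d' * kE a c' d' e :=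
          sum_mul_one' _ _ (hkF1 a b')
      _ = pA a * pB b' * (pC c' * kD b' c' d' * kE a c' d' e) := by ring
  have inner2 : ∀ a b', (∑ c', ∑ d', Q a b' c' d' e (f₀, e))
      = pA a * pB b' * (H a b' * kF a b' (f₀, e)) := by
    intro a b'
    rw [hHval]
    calc (∑ c', ∑ d', Q a b' c' d' e (f₀, e))
        = ∑ c', ∑ d', (pA a * pB b' * kF a b' (f₀, e)) *
            (pC c' * kD b' c' d' * kE a c' d' e) := by
          refine Finset.sum_congr rfl fun c' _ => Finset.sum_congr rfl fun d' _ => ?_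
          rw [hQ]; ring
      _ = (pA a * pB b' * kF a b' (f₀, e)) *
            (∑ c', ∑ d', pC c' * kD b' c' d' * kE a c' d' e) := by
          rw [Finset.mul_sum]
          refine Finset.sum_congr rfl fun c' _ => ?_
          rw [Finset.mul_sum]
      _ = pA a * pB b' *
            ((∑ c', ∑ d', pC c' * kD b' c' d' * kE a c' d' e) * kF a b' (f₀, e)) := by
          ring
  -- the denominator of the statement, per `b`
  have hD : ∀ b', (∑ a, ∑ c', ∑ d', ∑ f, Q a b' c' d' e f)
      = pB b' * ∑ a, pA a * H a b' := by
    intro b'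
    rw [Finset.mul_sum]
    refine Finset.sum_congr rfl fun a _ => ?_
    rw [inner1 a b']; ring
  -- the numerator, per `b`
  have hN : ∀ b', (∑ a, ∑ c', ∑ d', ∑ fS, Q a b' c' d' e (f₀, fS))
      = pB b' * ∑ a, pA a * (H a b' * kF a b' (f₀, e)) := by
    intro b'
    rw [Finset.mul_sum]
    refine Finset.sum_congr rfl fun a _ => ?_
    calc (∑ c', ∑ d', ∑ fS, Q a b' c' d' e (f₀, fS))
        = ∑ c', ∑ d', Q a b' c' d' e (f₀, e) := by
          refine Finset.sum_congr rfl fun c' _ => Finset.sum_congr rfl fun d' _ => ?_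
          exact hFSsum a b' c' d'
      _ = pA a * pB b' * (H a b' * kF a b' (f₀, e)) := inner2 a b'
      _ = pB b' * (pA a * (H a b' * kF a b' (f₀, e))) := by ring
  -- expression of `M`
  have hM : M = ∑ b', pB b' * ∑ a, pA a * H a b' := by
    rw [hMdef, Finset.sum_comm]
    refine Finset.sum_congr rfl fun b' _ => ?_
    rw [Finset.mul_sum]
    refine Finset.sum_congr rfl fun a _ => ?_
    rw [inner1 a b']; ring
  -- denominator of `hEind` in factored form
  have hdenom : ∀ c' d', (∑ a, ∑ b', ∑ e', ∑ f, Q a b' c' d' e' f)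
      = pC c' * ∑ b', pB b' * kD b' c' d' := by
    intro c' d'
    calc (∑ a, ∑ b', ∑ e', ∑ f, Q a b' c' d' e' f)
        = ∑ a, ∑ b', pA a * (pC c' * (pB b' * kD b' c' d')) := by
          refine Finset.sum_congr rfl fun a _ => Finset.sum_congr rfl fun b' _ => ?_
          calc (∑ e', ∑ f, Q a b' c' d' e' f)
              = ∑ e', (pA a * pB b' * pC c' * kD b' c' d') * kE a c' d' e' := by
                refine Finset.sum_congr rfl fun e' _ => ?_
                calc (∑ f, Q a b' c' d' e' f)
                    = ∑ f, (pA a * pB b' * pC c' * kD b' c' d' * kE a c' d' e') *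
                        kF a b' f := by
                      refine Finset.sum_congr rfl fun f _ => ?_; rw [hQ]
                  _ = (pA a * pB b' * pC c' * kD b' c' d') * kE a c' d' e' :=
                      sum_mul_one' _ _ (hkF1 a b')
            _ = pA a * pB b' * pC c' * kD b' c' d' := sum_mul_one' _ _ (hkE1 a c' d')
            _ = pA a * (pC c' * (pB b' * kD b' c' d')) := by ring
      _ = ∑ a, pA a * (pC c' * ∑ b', pB b' * kD b' c' d') := by
          refine Finset.sum_congr rfl fun a _ => ?_
          rw [Finset.mul_sum, Finset.mul_sum]
      _ = (∑ a, pA a) * (pC c' * ∑ b', pB b' * kD b' c' d') :=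
          (Finset.sum_mul _ _ _).symm
      _ = pC c' * ∑ b', pB b' * kD b' c' d' := by rw [hpA1, one_mul]
  -- numerator of `hEind` in factored form
  have hnumer : ∀ c' d', (∑ a, ∑ b', ∑ f, Q a b' c' d' e f)
      = (pC c' * ∑ b', pB b' * kD b' c' d') * V c' d' := by
    intro c' d'
    calc (∑ a, ∑ b', ∑ f, Q a b' c' d' e f)
        = ∑ a, (pA a * kE a c' d' e) * (pC c' * ∑ b', pB b' * kD b' c' d') := by
          refine Finset.sum_congr rfl fun a _ => ?_
          calc (∑ b', ∑ f, Q a b' c' d' e f)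
              = ∑ b', (pA a * kE a c' d' e) * (pC c' * (pB b' * kD b' c' d')) := by
                refine Finset.sum_congr rfl fun b' _ => ?_
                calc (∑ f, Q a b' c' d' e f)
                    = ∑ f, (pA a * pB b' * pC c' * kD b' c' d' * kE a c' d' e) *
                        kF a b' f := by
                      refine Finset.sum_congr rfl fun f _ => ?_; rw [hQ]
                  _ = pA a * pB b' * pC c' * kD b' c' d' * kE a c' d' e :=
                      sum_mul_one' _ _ (hkF1 a b')
                  _ = (pA a * kE a c' d' e) * (pC c' * (pB b' * kD b' c' d')) := by
                      ring
            _ = ∑ b', ((pA a * kE a c' d' e) * pC c') * (pB b' * kD b' c' d') := by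
                refine Finset.sum_congr rfl fun b' _ => ?_; ring
            _ = ((pA a * kE a c' d' e) * pC c') * ∑ b', pB b' * kD b' c' d' :=
                sum_pull _ _
            _ = (pA a * kE a c' d' e) * (pC c' * ∑ b', pB b' * kD b' c' d') := by
                ring
      _ = (∑ a, pA a * kE a c' d' e) * (pC c' * ∑ b', pB b' * kD b' c' d') :=
          (Finset.sum_mul _ _ _).symm
      _ = (pC c' * ∑ b', pB b' * kD b' c' d') * V c' d' := by
          rw [hVdef]; ring
  -- per-`b` left-hand side
  have hLHSb : ∀ b', (∑ a, ∑ fS, Q a b' c d e (f₀, fS))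
      = pB b' * pC c * kD b' c d * ∑ a, pA a * (kE a c d e * kF a b' (f₀, e)) := by
    intro b'
    calc (∑ a, ∑ fS, Q a b' c d e (f₀, fS))
        = ∑ a, (pB b' * pC c * kD b' c d) * (pA a * (kE a c d e * kF a b' (f₀, e))) := by
          refine Finset.sum_congr rfl fun a _ => ?_
          rw [hFSsum a b' c d, hQ]; ring
      _ = (pB b' * pC c * kD b' c d) * ∑ a, pA a * (kE a c d e * kF a b' (f₀, e)) :=
          sum_pull _ _
      _ = pB b' * pC c * kD b' c d * ∑ a, pA a * (kE a c d e * kF a b' (f₀, e)) := by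
          ring
  -- swap the outer two sums on the left-hand side
  rw [show (∑ a, ∑ b, ∑ fS, Q a b c d e (f₀, fS))
      = ∑ b, ∑ a, ∑ fS, Q a b c d e (f₀, fS) from Finset.sum_comm]
  refine Finset.sum_congr rfl fun b _ => ?_
  by_cases hb : pB b = 0
  · simp only [hQ, hb, mul_zero, zero_mul, Finset.sum_const_zero, zero_div]
  by_cases hc : pC c = 0
  · simp only [hQ, hc, mul_zero, zero_mul, Finset.sum_const_zero, zero_div, mul_zero]
  by_cases hd : kD b c d = 0
  · simp only [hQ, hd, mul_zero, zero_mul, Finset.sum_const_zero, zero_div]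
  -- main case
  have hbpos : 0 < pB b := lt_of_le_of_ne (hpB0 b) (Ne.symm hb)
  -- independence: `V c' d' = M` on the support of `(C,D)` reachable given `b`
  have hVM : ∀ c' d', pC c' ≠ 0 → kD b c' d' ≠ 0 → V c' d' = M := by
    intro c' d' h1 h2
    have hS : 0 < ∑ b', pB b' * kD b' c' d' := by
      have hle : pB b * kD b c' d' ≤ ∑ b', pB b' * kD b' c' d' :=
        Finset.single_le_sum (f := fun b' => pB b' * kD b' c' d')
          (fun b' _ => mul_nonneg (hpB0 b') (hkD0 b' c' d')) (Finset.mem_univ b)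
      have : 0 < pB b * kD b c' d' :=
        mul_pos hbpos (lt_of_le_of_ne (hkD0 b c' d') (Ne.symm h2))
      linarith
    have hcpos : 0 < pC c' := lt_of_le_of_ne (hpC0 c') (Ne.symm h1)
    have hKpos : 0 < pC c' * ∑ b', pB b' * kD b' c' d' := mul_pos hcpos hS
    have hind := hEind c' d' e (by rw [hdenom c' d']; exact hKpos)
    rw [hnumer c' d', hdenom c' d', ← hMdef] at hind
    rwa [mul_div_cancel_left₀ _ (ne_of_gt hKpos)] at hind
  -- key consequence of Condition 1
  have hA : (∑ a, pA a * (kE a c d e * kF a b (f₀, e)))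
      = ∑ a, pA a * (H a b * kF a b (f₀, e)) := by
    refine Finset.sum_congr rfl fun a _ => ?_
    by_cases ha : pA a = 0
    · rw [ha]; ring
    by_cases hf : kF a b (f₀, e) = 0
    · rw [hf]; ring
    have key : ∀ c' d', pC c' ≠ 0 → kD b c' d' ≠ 0 → kE a c' d' e = 1 := by
      intro c' d' h1 h2
      have hz : ∀ e' ∈ Finset.univ, e' ≠ e → kE a c' d' e' = 0 := by
        intro e' _ hne
        by_contra hk
        have hzero := hFS a b c' d' e' f₀ e (Ne.symm hne)
        rw [hQ] at hzero
        exact (mul_ne_zero (mul_ne_zero (mul_ne_zero (mul_ne_zero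
          (mul_ne_zero ha hb) h1) h2) hk) hf) hzero
      have := hkE1 a c' d'
      rwa [Finset.sum_eq_single_of_mem e (Finset.mem_univ e)
        (fun e' he' hne => hz e' he' hne)] at this
    have hone : kE a c d e = 1 := key c d hc hd
    have hH1 : H a b = 1 := by
      rw [hHval]
      calc (∑ c', ∑ d', pC c' * kD b c' d' * kE a c' d' e)
          = ∑ c', ∑ d', pC c' * kD b c' d' := by
            refine Finset.sum_congr rfl fun c' _ => Finset.sum_congr rfl fun d' _ => ?_
            by_cases h1 : pC c' = 0
            · rw [h1]; ring
            by_cases h2 : kD b c' d' = 0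
            · rw [h2]; ring
            rw [key c' d' h1 h2, mul_one]
        _ = ∑ c', pC c' * ∑ d', kD b c' d' := by
            refine Finset.sum_congr rfl fun c' _ => (sum_pull _ _)
        _ = ∑ c', pC c' := by
            refine Finset.sum_congr rfl fun c' _ => ?_
            rw [hkD1 b c', mul_one]
        _ = 1 := hpC1
    rw [hone, hH1]
  -- the average of `H` over `a` is `M`
  have hB : (∑ a, pA a * H a b) = M := by
    have h1 : (∑ a, pA a * H a b) = ∑ c', ∑ d', (pC c' * kD b c' d') * V c' d' := by
      calc (∑ a, pA a * H a b)
          = ∑ a, ∑ c', ∑ d', pA a * (pC c' * kD b c' d' * kE a c' d' e) := by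
            refine Finset.sum_congr rfl fun a _ => ?_
            rw [hHval, Finset.mul_sum]
            refine Finset.sum_congr rfl fun c' _ => ?_
            rw [Finset.mul_sum]
        _ = ∑ c', ∑ d', ∑ a, pA a * (pC c' * kD b c' d' * kE a c' d' e) := by
            rw [Finset.sum_comm]
            refine Finset.sum_congr rfl fun c' _ => Finset.sum_comm
        _ = ∑ c', ∑ d', (pC c' * kD b c' d') * V c' d' := by
            refine Finset.sum_congr rfl fun c' _ => Finset.sum_congr rfl fun d' _ => ?_
            rw [hVdef]
            calc (∑ a, pA a * (pC c' * kD b c' d' * kE a c' d' e))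
                = ∑ a, (pC c' * kD b c' d') * (pA a * kE a c' d' e) := by
                  refine Finset.sum_congr rfl fun a _ => ?_; ring
              _ = (pC c' * kD b c' d') * ∑ a, pA a * kE a c' d' e := sum_pull _ _
    rw [h1]
    calc (∑ c', ∑ d', (pC c' * kD b c' d') * V c' d')
        = ∑ c', ∑ d', (pC c' * kD b c' d') * M := by
          refine Finset.sum_congr rfl fun c' _ => Finset.sum_congr rfl fun d' _ => ?_
          by_cases h1 : pC c' = 0
          · rw [h1]; ring
          by_cases h2 : kD b c' d' = 0
          · rw [h2]; ring
          rw [hVM c' d' h1 h2]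
      _ = ∑ c', (pC c' * ∑ d', kD b c' d') * M := by
          refine Finset.sum_congr rfl fun c' _ => ?_
          calc (∑ d', pC c' * kD b c' d' * M)
              = ∑ d', (pC c' * M) * kD b c' d' := by
                refine Finset.sum_congr rfl fun d' _ => ?_; ring
            _ = (pC c' * M) * ∑ d', kD b c' d' := sum_pull _ _
            _ = (pC c' * ∑ d', kD b c' d') * M := by ring
      _ = ∑ c', pC c' * M := by
          refine Finset.sum_congr rfl fun c' _ => ?_
          rw [hkD1 b c', mul_one]
      _ = (∑ c', pC c') * M := (Finset.sum_mul _ _ _).symm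
      _ = M := by rw [hpC1, one_mul]
  -- put everything together
  rw [hLHSb b, hN b, hD b, hB, hA]
  rw [mul_div_mul_left _ _ hb]
  set N' : ℝ := ∑ a, pA a * (H a b * kF a b (f₀, e)) with hN'def
  by_cases hM0 : M = 0
  · have hz : ∀ a ∈ Finset.univ, pA a * H a b = 0 := by
      rw [← Finset.sum_eq_zero_iff_of_nonneg
        (fun a _ => mul_nonneg (hpA0 a) (hH0 a b))]
      rw [hB]; exact hM0
    have hN'0 : N' = 0 := by
      rw [hN'def]
      refine Finset.sum_eq_zero fun a _ => ?_
      have := hz a (Finset.mem_univ a)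
      calc pA a * (H a b * kF a b (f₀, e)) = (pA a * H a b) * kF a b (f₀, e) := by ring
        _ = 0 := by rw [this, zero_mul]
    rw [hM0, hN'0]; ring
  · rw [mul_assoc (pB b * pC c * kD b c d) M (N' / M)]
    rw [mul_div_cancel₀ N' hM0]
end

section
/- Any distribution of the form P(s_1,s_2,o_1,o_2) = \sum_b Q(b)Q(s_1)Q(s_2)Q(o_1|s_1,b)Q(o_2|s_2,b), with s_1,s_2,o_1,o_2 ∈ {0,1}, satisfies the CHSH inequality: P(O_1=O_2 | S_1=0,S_2=0) + P(O_1=O_2 | S_1=0,S_2=1) + P(O_1=O_2 | S_1=1,S_2=0) + P(O_1≠O_2 | S_1=1,S_2=1) ≤ 3, provided Q(s_1) > 0 and Q(s_2) > 0 for all s_1,s_2. -/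
/-- any distribution of the local form
`P(s₁,s₂,o₁,o₂) = ∑_b Q(b)Q(s₁)Q(s₂)Q(o₁|s₁,b)Q(o₂|s₂,b)` satisfies the CHSH
inequality (with settings `s₁,s₂` and outcomes `o₁,o₂`, all binary). -/
theorem stmt_4 {B : Type} [Fintype B]
    (μ : B → ℝ) (q1 q2 : Bool → ℝ)
    (k1 k2 : B → Bool → Bool → ℝ)
    (hμ0 : ∀ b, 0 ≤ μ b) (hμ1 : ∑ b, μ b = 1)
    (hq10 : ∀ s, 0 ≤ q1 s) (hq11 : ∑ s, q1 s = 1)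
    (hq20 : ∀ s, 0 ≤ q2 s) (hq21 : ∑ s, q2 s = 1)
    (hk10 : ∀ b s o, 0 ≤ k1 b s o) (hk11 : ∀ b s, ∑ o, k1 b s o = 1)
    (hk20 : ∀ b s o, 0 ≤ k2 b s o) (hk21 : ∀ b s, ∑ o, k2 b s o = 1)
    (hq1pos : ∀ s, 0 < q1 s) (hq2pos : ∀ s, 0 < q2 s)
    (P : Bool → Bool → Bool → Bool → ℝ)
    (hP : ∀ s₁ s₂ o₁ o₂,
      P s₁ s₂ o₁ o₂ = ∑ b, μ b * q1 s₁ * q2 s₂ * k1 b s₁ o₁ * k2 b s₂ o₂) :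
    (∑ x, P false false x x) / (∑ o₁, ∑ o₂, P false false o₁ o₂) +
    (∑ x, P false true x x) / (∑ o₁, ∑ o₂, P false true o₁ o₂) +
    (∑ x, P true false x x) / (∑ o₁, ∑ o₂, P true false o₁ o₂) +
    (∑ x, P true true x (!x)) / (∑ o₁, ∑ o₂, P true true o₁ o₂) ≤ 3 := by
  have hk11' : ∀ b s, k1 b s true + k1 b s false = 1 := fun b s => by
    simpa [Fintype.sum_bool] using hk11 b s
  have hk21' : ∀ b s, k2 b s true + k2 b s false = 1 := fun b s => by
    simpa [Fintype.sum_bool] using hk21 b s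
  have hden : ∀ s₁ s₂, (∑ o₁, ∑ o₂, P s₁ s₂ o₁ o₂) = q1 s₁ * q2 s₂ := by
    intro s₁ s₂
    simp only [Fintype.sum_bool, hP, ← Finset.sum_add_distrib]
    have h : ∀ b ∈ Finset.univ (α := B),
        (μ b * q1 s₁ * q2 s₂ * k1 b s₁ true * k2 b s₂ true +
         μ b * q1 s₁ * q2 s₂ * k1 b s₁ true * k2 b s₂ false) +
        (μ b * q1 s₁ * q2 s₂ * k1 b s₁ false * k2 b s₂ true +
         μ b * q1 s₁ * q2 s₂ * k1 b s₁ false * k2 b s₂ false)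
        = μ b * (q1 s₁ * q2 s₂) := by
      intro b _
      calc (μ b * q1 s₁ * q2 s₂ * k1 b s₁ true * k2 b s₂ true +
         μ b * q1 s₁ * q2 s₂ * k1 b s₁ true * k2 b s₂ false) +
        (μ b * q1 s₁ * q2 s₂ * k1 b s₁ false * k2 b s₂ true +
         μ b * q1 s₁ * q2 s₂ * k1 b s₁ false * k2 b s₂ false)
          = μ b * (q1 s₁ * q2 s₂) *
            ((k1 b s₁ true + k1 b s₁ false) * (k2 b s₂ true + k2 b s₂ false)) := by ring
        _ = μ b * (q1 s₁ * q2 s₂) := by rw [hk11', hk21']; ring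
    rw [Finset.sum_congr rfl h, ← Finset.sum_mul, hμ1, one_mul]
  have hnum : ∀ s₁ s₂, (∑ x, P s₁ s₂ x x)
      = q1 s₁ * q2 s₂ * ∑ b, μ b *
        (k1 b s₁ true * k2 b s₂ true + k1 b s₁ false * k2 b s₂ false) := by
    intro s₁ s₂
    simp only [Fintype.sum_bool, hP, ← Finset.sum_add_distrib, Finset.mul_sum]
    exact Finset.sum_congr rfl fun b _ => by ring
  have hnum' : (∑ x, P true true x (!x))
      = q1 true * q2 true * ∑ b, μ b *
        (k1 b true true * k2 b true false + k1 b true false * k2 b true true) := by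
    simp only [Fintype.sum_bool, hP, ← Finset.sum_add_distrib, Finset.mul_sum,
      Bool.not_true, Bool.not_false]
    exact Finset.sum_congr rfl fun b _ => by ring
  have hfrac : ∀ s₁ s₂, (∑ x, P s₁ s₂ x x) / (∑ o₁, ∑ o₂, P s₁ s₂ o₁ o₂)
      = ∑ b, μ b * (k1 b s₁ true * k2 b s₂ true + k1 b s₁ false * k2 b s₂ false) := by
    intro s₁ s₂
    rw [hden, hnum, mul_div_cancel_left₀ _ (ne_of_gt (mul_pos (hq1pos s₁) (hq2pos s₂)))]
  have hfrac' : (∑ x, P true true x (!x)) / (∑ o₁, ∑ o₂, P true true o₁ o₂)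
      = ∑ b, μ b * (k1 b true true * k2 b true false + k1 b true false * k2 b true true) := by
    rw [hden, hnum', mul_div_cancel_left₀ _ (ne_of_gt (mul_pos (hq1pos true) (hq2pos true)))]
  rw [hfrac, hfrac, hfrac, hfrac', ← Finset.sum_add_distrib, ← Finset.sum_add_distrib,
    ← Finset.sum_add_distrib]
  calc (∑ b, (((μ b * (k1 b false true * k2 b false true + k1 b false false * k2 b false false)
        + μ b * (k1 b false true * k2 b true true + k1 b false false * k2 b true false))
        + μ b * (k1 b true true * k2 b false true + k1 b true false * k2 b false false))
        + μ b * (k1 b true true * k2 b true false + k1 b true false * k2 b true true)))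
      ≤ ∑ b, μ b * 3 := by
        apply Finset.sum_le_sum
        intro b _
        have hp := hk10 b false true
        have hp' := hk10 b true true
        have hq := hk20 b false true
        have hq' := hk20 b true true
        have f1 : k1 b false false = 1 - k1 b false true := by linarith [hk11' b false]
        have f2 : k1 b true false = 1 - k1 b true true := by linarith [hk11' b true]
        have f3 : k2 b false false = 1 - k2 b false true := by linarith [hk21' b false]
        have f4 : k2 b true false = 1 - k2 b true true := by linarith [hk21' b true]
        have hp1 : k1 b false true ≤ 1 := by linarith [hk11' b false, hk10 b false false]
        have hp1' : k1 b true true ≤ 1 := by linarith [hk11' b true, hk10 b true false]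
        have hq1 : k2 b false true ≤ 1 := by linarith [hk21' b false, hk20 b false false]
        have hq1' : k2 b true true ≤ 1 := by linarith [hk21' b true, hk20 b true false]
        rw [f1, f2, f3, f4]
        have key : (k1 b false true * k2 b false true + (1 - k1 b false true) * (1 - k2 b false true))
            + (k1 b false true * k2 b true true + (1 - k1 b false true) * (1 - k2 b true true))
            + (k1 b true true * k2 b false true + (1 - k1 b true true) * (1 - k2 b false true))
            + (k1 b true true * (1 - k2 b true true) + (1 - k1 b true true) * k2 b true true) ≤ 3 := by
          nlinarith [mul_nonneg (mul_nonneg (sub_nonneg.2 hp1) hq) (sub_nonneg.2 hp1'),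
            mul_nonneg (mul_nonneg (sub_nonneg.2 hp1) hp') hq',
            mul_nonneg (mul_nonneg hp (sub_nonneg.2 hp1')) (sub_nonneg.2 hq1'),
            mul_nonneg (mul_nonneg hp hp') (sub_nonneg.2 hq1)]
        nlinarith [hμ0 b, key]
    _ = 3 := by rw [← Finset.sum_mul, hμ1, one_mul]
end

section
/- There is no family of functions Q(b) (a probability distribution on a finite type), Q(d|b,c) and Q(f_O|b,e) (stochastic kernels with c,e,d,f_O ∈ {0,1}) such that for all c,e,f_O,d ∈ {0,1}: (1/4)·[cos²(π/8) if d = f_O XOR (c AND e), else sin²(π/8)] = \sum_b Q(b)·Q(d|b,c)·(1/2)·Q(f_O|b,e)·(1/2)... i.e., the quantum distribution P(c,e,f_O,d) of Table 1 cannot be written as \sum_b Q(b)·(1/2)·Q(d|b,c)·(1/2)·Q(f_O|b,e). -/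
set_option maxHeartbeats 1000000

open Real

/-- the Table 1 distribution cannot be written in Bell's
local-causality form `∑_b Q(b)·(1/2)·Q(d|b,c)·(1/2)·Q(f_O|b,e)`. -/
theorem stmt_6 (B : Type) [Fintype B]
    (μ : B → ℝ) (kD kF : B → Bool → Bool → ℝ)
    (hμ0 : ∀ b, 0 ≤ μ b) (hμ1 : ∑ b, μ b = 1)
    (hkD0 : ∀ b c d, 0 ≤ kD b c d) (hkD1 : ∀ b c, ∑ d, kD b c d = 1)
    (hkF0 : ∀ b e f₀, 0 ≤ kF b e f₀) (hkF1 : ∀ b e, ∑ f₀, kF b e f₀ = 1) :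
    ¬ (∀ c e f₀ d : Bool,
      (1/8 : ℝ) * (if d = xor f₀ (c && e) then cos (π/8) ^ 2
                   else sin (π/8) ^ 2) =
      ∑ b, μ b * (1/2) * kD b c d * (1/2) * kF b e f₀) := by
  intro h
  have hcos : cos (π/8) ^ 2 - sin (π/8) ^ 2 = Real.sqrt 2 / 2 := by
    have h1 : Real.cos (π/4) = Real.sqrt 2 / 2 := Real.cos_pi_div_four
    have h2 : Real.cos (π/4) = 2 * cos (π/8) ^ 2 - 1 := by
      rw [show (π:ℝ)/4 = 2*(π/8) by ring, Real.cos_two_mul]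
    have h3 := Real.sin_sq_add_cos_sq (π/8)
    linarith
  have key : ∀ c e : Bool,
      (if c && e then -(Real.sqrt 2 / 8) else Real.sqrt 2 / 8) =
      ∑ b, μ b * (1/4) * ((kD b c false - kD b c true) * (kF b e false - kF b e true)) := by
    intro c e
    have e1 := h c e false false
    have e2 := h c e true true
    have e3 := h c e true false
    have e4 := h c e false true
    have hc : (if c && e then -(Real.sqrt 2/8) else Real.sqrt 2/8) =
        (1/8:ℝ) * (if (false:Bool) = xor false (c&&e) then cos (π/8)^2 else sin (π/8)^2)
        + (1/8) * (if (true:Bool) = xor true (c&&e) then cos (π/8)^2 else sin (π/8)^2)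
        - (1/8) * (if (false:Bool) = xor true (c&&e) then cos (π/8)^2 else sin (π/8)^2)
        - (1/8) * (if (true:Bool) = xor false (c&&e) then cos (π/8)^2 else sin (π/8)^2) := by
      cases c <;> cases e <;>
        simp only [Bool.and_false, Bool.and_true, Bool.false_and, Bool.true_and,
          Bool.and_self, Bool.xor_false, Bool.xor_true, Bool.false_xor, Bool.true_xor,
          Bool.not_false, Bool.not_true, Bool.false_eq_true, Bool.true_eq_false,
          if_false, if_true, reduceIte] <;> linarith [hcos]
    rw [hc, e1, e2, e3, e4]
    rw [← Finset.sum_add_distrib, ← Finset.sum_sub_distrib, ← Finset.sum_sub_distrib]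
    exact Finset.sum_congr rfl (fun b _ => by ring)
  have k1 := key false false
  have k2 := key false true
  have k3 := key true false
  have k4 := key true true
  simp only [Bool.and_self, Bool.and_false, Bool.false_and, Bool.true_and,
    if_true, if_false, Bool.false_eq_true] at k1 k2 k3 k4
  have hmerge :
      (∑ b, μ b * (1/4) * ((kD b false false - kD b false true) * (kF b false false - kF b false true)))
      + (∑ b, μ b * (1/4) * ((kD b false false - kD b false true) * (kF b true false - kF b true true)))
      + (∑ b, μ b * (1/4) * ((kD b true false - kD b true true) * (kF b false false - kF b false true)))
      - (∑ b, μ b * (1/4) * ((kD b true false - kD b true true) * (kF b true false - kF b true true)))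
      = ∑ b, μ b * (1/4) *
        ((kD b false false - kD b false true) * ((kF b false false - kF b false true) + (kF b true false - kF b true true))
        + (kD b true false - kD b true true) * ((kF b false false - kF b false true) - (kF b true false - kF b true true))) := by
    rw [← Finset.sum_add_distrib, ← Finset.sum_add_distrib, ← Finset.sum_sub_distrib]
    exact Finset.sum_congr rfl (fun b _ => by ring)
  have hbig : Real.sqrt 2 / 2 = ∑ b, μ b * (1/4) *
      ((kD b false false - kD b false true) * ((kF b false false - kF b false true) + (kF b true false - kF b true true))
      + (kD b true false - kD b true true) * ((kF b false false - kF b false true) - (kF b true false - kF b true true))) := by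
    linarith [k1, k2, k3, k4, hmerge]
  have hb : (∑ b, μ b * (1/4) *
      ((kD b false false - kD b false true) * ((kF b false false - kF b false true) + (kF b true false - kF b true true))
      + (kD b true false - kD b true true) * ((kF b false false - kF b false true) - (kF b true false - kF b true true))))
      ≤ ∑ b, μ b * (1/2) := by
    apply Finset.sum_le_sum
    intro b _
    have hD1 := hkD1 b false
    have hD2 := hkD1 b true
    have hF1 := hkF1 b false
    have hF2 := hkF1 b true
    simp only [Fintype.sum_bool] at hD1 hD2 hF1 hF2
    set a0 := kD b false false - kD b false true with ha0def
    set a1 := kD b true false - kD b true true with ha1def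
    set b0 := kF b false false - kF b false true with hb0def
    set b1 := kF b true false - kF b true true with hb1def
    have ha0 : -1 ≤ a0 ∧ a0 ≤ 1 := by
      constructor <;> [linarith [hkD0 b false false, hD1]; linarith [hkD0 b false true, hD1]]
    have ha1 : -1 ≤ a1 ∧ a1 ≤ 1 := by
      constructor <;> [linarith [hkD0 b true false, hD2]; linarith [hkD0 b true true, hD2]]
    have hbb0 : -1 ≤ b0 ∧ b0 ≤ 1 := by
      constructor <;> [linarith [hkF0 b false false, hF1]; linarith [hkF0 b false true, hF1]]
    have hbb1 : -1 ≤ b1 ∧ b1 ≤ 1 := by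
      constructor <;> [linarith [hkF0 b true false, hF2]; linarith [hkF0 b true true, hF2]]
    have habs0 : |a0| ≤ 1 := abs_le.mpr ha0
    have habs1 : |a1| ≤ 1 := abs_le.mpr ha1
    have h1 : a0 * (b0 + b1) ≤ |b0 + b1| := by
      calc a0 * (b0 + b1) ≤ |a0 * (b0 + b1)| := le_abs_self _
        _ = |a0| * |b0 + b1| := abs_mul _ _
        _ ≤ 1 * |b0 + b1| := mul_le_mul_of_nonneg_right habs0 (abs_nonneg _)
        _ = |b0 + b1| := one_mul _
    have h2 : a1 * (b0 - b1) ≤ |b0 - b1| := by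
      calc a1 * (b0 - b1) ≤ |a1 * (b0 - b1)| := le_abs_self _
        _ = |a1| * |b0 - b1| := abs_mul _ _
        _ ≤ 1 * |b0 - b1| := mul_le_mul_of_nonneg_right habs1 (abs_nonneg _)
        _ = |b0 - b1| := one_mul _
    have h3 : |b0 + b1| + |b0 - b1| ≤ 2 := by
      rcases abs_cases (b0 + b1) with ⟨hx, _⟩ | ⟨hx, _⟩ <;>
        rcases abs_cases (b0 - b1) with ⟨hy, _⟩ | ⟨hy, _⟩ <;>
        rw [hx, hy] <;> linarith [hbb0.1, hbb0.2, hbb1.1, hbb1.2]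
    have hchsh : a0 * (b0 + b1) + a1 * (b0 - b1) ≤ 2 := by linarith
    have h4 : μ b * (1/4) * (a0 * (b0 + b1) + a1 * (b0 - b1)) ≤ μ b * (1/4) * 2 :=
      mul_le_mul_of_nonneg_left hchsh (mul_nonneg (hμ0 b) (by norm_num))
    linarith
  have hend : (∑ b, μ b * (1/2 : ℝ)) = 1/2 := by
    rw [← Finset.sum_mul, hμ1]; norm_num
  have hfin : Real.sqrt 2 / 2 ≤ 1/2 := by
    rw [hbig]; linarith [hb, hend]
  nlinarith [Real.sq_sqrt (show (0:ℝ) ≤ 2 by norm_num), Real.sqrt_nonneg 2]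
end

section
/- Let Q be a probability distribution on finite variables A,B,C,D,E,F factorizing as Q(a,b,c,d,e,f) = Q(a)Q(b)Q(c)Q(d|b,c)Q(e|a,c)Q(f|a,b) (the triangle causal structure with D=(S_1,O_1), E=(S_1',S_2'), F=(S_2,O_2)). Suppose S_1' = S_1 and S_2' = S_2 almost surely. Then the marginal of (S_1,S_2,O_1,O_2) satisfies P(s_1,s_2,o_1,o_2) = \sum_b Q(b)Q(s_1)Q(s_2)Q(o_1|s_1,b)Q(o_2|s_2,b). -/
private lemma hlp_right {x y : ℝ} (h : x * y = 0) (hx : x ≠ 0) : y = 0 := by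
  rcases mul_eq_zero.1 h with h | h
  · exact absurd h hx
  · exact h

private lemma hlp_left {x y : ℝ} (h : x * y = 0) (hy : y ≠ 0) : x = 0 := by
  rcases mul_eq_zero.1 h with h | h
  · exact h
  · exact absurd h hy

/-- Lemma 3 of the paper, Fritz's reduction: in the triangle
causal structure with `D = (S₁,O₁)`, `E = (S₁',S₂')`, `F = (S₂,O₂)` (binary
pairs) and `S₁' = S₁`, `S₂' = S₂` almost surely, the marginal of
`(S₁,S₂,O₁,O₂)` takes Bell's local-causality form
`P(s₁,s₂,o₁,o₂) = ∑_b Q(b)Q(s₁)Q(s₂)Q(o₁|s₁,b)Q(o₂|s₂,b)`. -/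
theorem stmt_8 {A B C : Type} [Fintype A] [Fintype B] [Fintype C]
    (pA : A → ℝ) (pB : B → ℝ) (pC : C → ℝ)
    (hpA0 : ∀ a, 0 ≤ pA a) (hpA1 : ∑ a, pA a = 1)
    (hpB0 : ∀ b, 0 ≤ pB b) (hpB1 : ∑ b, pB b = 1)
    (hpC0 : ∀ c, 0 ≤ pC c) (hpC1 : ∑ c, pC c = 1)
    (kD : B → C → Bool × Bool → ℝ) (kE : A → C → Bool × Bool → ℝ)
    (kF : A → B → Bool × Bool → ℝ)
    (hkD0 : ∀ b c d, 0 ≤ kD b c d) (hkD1 : ∀ b c, ∑ d, kD b c d = 1)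
    (hkE0 : ∀ a c e, 0 ≤ kE a c e) (hkE1 : ∀ a c, ∑ e, kE a c e = 1)
    (hkF0 : ∀ a b f, 0 ≤ kF a b f) (hkF1 : ∀ a b, ∑ f, kF a b f = 1)
    (Q : A → B → C → Bool × Bool → Bool × Bool → Bool × Bool → ℝ)
    (hQ : ∀ a b c d e f,
      Q a b c d e f = pA a * pB b * pC c * kD b c d * kE a c e * kF a b f)
    -- `S₁' = S₁` and `S₂' = S₂` almost surely
    (hAS : ∀ a b c s₁ o₁ s₁' s₂' s₂ o₂, (s₁' ≠ s₁ ∨ s₂' ≠ s₂) →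
      Q a b c (s₁, o₁) (s₁', s₂') (s₂, o₂) = 0) :
    ∀ s₁ s₂ o₁ o₂,
      (∑ a, ∑ b, ∑ c, ∑ e, Q a b c (s₁, o₁) e (s₂, o₂)) =
      ∑ b, pB b *
        (∑ a, ∑ b', ∑ c, ∑ o₁', ∑ e, ∑ f, Q a b' c (s₁, o₁') e f) *
        (∑ a, ∑ b', ∑ c, ∑ d, ∑ e, ∑ o₂', Q a b' c d e (s₂, o₂')) *
        ((∑ a, ∑ c, ∑ e, ∑ f, Q a b c (s₁, o₁) e f) /
          (∑ a, ∑ c, ∑ o₁', ∑ e, ∑ f, Q a b c (s₁, o₁') e f)) *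
        ((∑ a, ∑ c, ∑ d, ∑ e, Q a b c d e (s₂, o₂)) /
          (∑ a, ∑ c, ∑ d, ∑ e, ∑ o₂', Q a b c d e (s₂, o₂'))) := by
  intro s₁ s₂ o₁ o₂
  classical
  -- elimination lemmas for unit sums
  have hF1 : ∀ a b (x : ℝ), ∑ f, x * kF a b f = x := fun a b x => by
    rw [← Finset.mul_sum, hkF1, mul_one]
  have hE1 : ∀ a c (x : ℝ), ∑ e, x * kE a c e = x := fun a c x => by
    rw [← Finset.mul_sum, hkE1, mul_one]
  have hE2 : ∀ a c (x y : ℝ), ∑ e, x * kE a c e * y = x * y := fun a c x y => by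
    rw [← Finset.sum_mul, ← Finset.mul_sum, hkE1, mul_one]
  have hD2 : ∀ b c (x y : ℝ), ∑ d, x * kD b c d * y = x * y := fun b c x y => by
    rw [← Finset.sum_mul, ← Finset.mul_sum, hkD1, mul_one]
  have hAone : ∀ (x : ℝ), ∑ a, pA a * x = x := fun x => by
    rw [← Finset.sum_mul, hpA1, one_mul]
  have hBone : ∀ (x : ℝ), ∑ b, pB b * x = x := fun x => by
    rw [← Finset.sum_mul, hpB1, one_mul]
  have hCone : ∀ (x : ℝ), ∑ c, pC c * x = x := fun x => by
    rw [← Finset.sum_mul, hpC1, one_mul]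
  have hKo2 : ∀ b c (s : Bool) (x y z : ℝ),
      ∑ o, x * kD b c (s, o) * y * z = x * (∑ o, kD b c (s, o)) * y * z := by
    intro b c s x y z
    rw [← Finset.sum_mul, ← Finset.sum_mul, ← Finset.mul_sum]
  -- the constraint derived from the almost-sure condition
  have hCst : ∀ a b c (s t s' t' : Bool), (s' ≠ s ∨ t' ≠ t) →
      pA a * pB b * pC c * (∑ o, kD b c (s, o)) * kE a c (s', t') *
        (∑ o, kF a b (t, o)) = 0 := by
    intro a b c s t s' t' h
    have h0 : ∑ o₁ : Bool, ∑ o₂ : Bool, Q a b c (s, o₁) (s', t') (t, o₂) = 0 :=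
      Finset.sum_eq_zero fun o₁ _ => Finset.sum_eq_zero fun o₂ _ =>
        hAS a b c s o₁ s' t' t o₂ h
    calc pA a * pB b * pC c * (∑ o, kD b c (s, o)) * kE a c (s', t') *
          (∑ o, kF a b (t, o))
        = ∑ o₁ : Bool, ∑ o₂ : Bool, Q a b c (s, o₁) (s', t') (t, o₂) := by
          simp only [hQ, ← Finset.mul_sum]
          rw [hKo2]
      _ = 0 := h0
  -- sums of partial marginals over Bool
  have hDvsum : ∀ b c, (∑ o, kD b c (true, o)) + (∑ o, kD b c (false, o)) = 1 := by
    intro b c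
    have := hkD1 b c
    rw [Fintype.sum_prod_type, Fintype.sum_bool] at this
    exact this
  have hFvsum : ∀ a b, (∑ o, kF a b (true, o)) + (∑ o, kF a b (false, o)) = 1 := by
    intro a b
    have := hkF1 a b
    rw [Fintype.sum_prod_type, Fintype.sum_bool] at this
    exact this
  have hDvnn : ∀ (s : Bool) b c, 0 ≤ ∑ o, kD b c (s, o) := fun s b c =>
    Finset.sum_nonneg fun o _ => hkD0 b c (s, o)
  have hFvnn : ∀ (t : Bool) a b, 0 ≤ ∑ o, kF a b (t, o) := fun t a b =>
    Finset.sum_nonneg fun o _ => hkF0 a b (t, o)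
  -- existence of positive points
  have hApos : ∃ a, 0 < pA a := by
    by_contra h
    push_neg at h
    have : ∑ a, pA a ≤ 0 := Finset.sum_nonpos fun a _ => h a
    linarith [hpA1]
  have hCpos : ∃ c, 0 < pC c := by
    by_contra h
    push_neg at h
    have : ∑ c, pC c ≤ 0 := Finset.sum_nonpos fun c _ => h c
    linarith [hpC1]
  have hEpos : ∀ a c, ∃ s' t', 0 < kE a c (s', t') := by
    intro a c
    by_contra h
    push_neg at h
    have : ∑ e, kE a c e ≤ 0 :=
      Finset.sum_nonpos fun e _ => by rcases e with ⟨s', t'⟩; exact h s' t'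
    linarith [hkE1 a c]
  have hDpos : ∀ b c, ∃ s, 0 < ∑ o, kD b c (s, o) := by
    intro b c
    by_contra h
    push_neg at h
    have h1 : (∑ o, kD b c (true, o)) = 0 := le_antisymm (h true) (hDvnn true b c)
    have h2 : (∑ o, kD b c (false, o)) = 0 := le_antisymm (h false) (hDvnn false b c)
    have := hDvsum b c
    rw [h1, h2] at this
    norm_num at this
  -- key deterministic-structure lemma
  have hKey : ∀ a c, 0 < pA a → 0 < pC c → ∀ b, 0 < pB b → ∀ s' t',
      0 < kE a c (s', t') →
      (∀ t, t ≠ t' → (∑ o, kF a b (t, o)) = 0) ∧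
      (∀ s, s ≠ s' → (∑ o, kD b c (s, o)) = 0) := by
    intro a c ha hc b hb s' t' he
    have part1 : ∀ t, t ≠ t' → (∑ o, kF a b (t, o)) = 0 := by
      intro t ht
      obtain ⟨s, hs⟩ := hDpos b c
      have h0 := hCst a b c s t s' t' (Or.inr (Ne.symm ht))
      exact hlp_right h0
        (ne_of_gt (mul_pos (mul_pos (mul_pos (mul_pos ha hb) hc) hs) he))
    refine ⟨part1, ?_⟩
    intro s hs
    have hFt' : (0:ℝ) < ∑ o, kF a b (t', o) := by
      have h0 : (∑ o, kF a b (!t', o)) = 0 := part1 (!t') (Bool.not_ne_self t')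
      have hsum := hFvsum a b
      cases t'
      · simp only [Bool.not_false] at h0
        rw [h0] at hsum
        linarith
      · simp only [Bool.not_true] at h0
        rw [h0] at hsum
        linarith
    have h0 := hCst a b c s t' s' t' (Or.inl (Ne.symm hs))
    have h1 : pA a * pB b * pC c * (∑ o, kD b c (s, o)) * kE a c (s', t') = 0 :=
      hlp_left h0 (ne_of_gt hFt')
    have h2 : pA a * pB b * pC c * (∑ o, kD b c (s, o)) = 0 :=
      hlp_left h1 (ne_of_gt he)
    exact hlp_right h2 (ne_of_gt (mul_pos (mul_pos ha hb) hc))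
  -- the marginal of S₁ depends only on c (on positive-probability points)
  have hDfix : ∀ c, 0 < pC c → ∀ (s : Bool) b b', 0 < pB b → 0 < pB b' →
      (∑ o, kD b c (s, o)) = ∑ o, kD b' c (s, o) := by
    intro c hc s b b' hb hb'
    obtain ⟨a, ha⟩ := hApos
    obtain ⟨s', t', he⟩ := hEpos a c
    have hval : ∀ b, 0 < pB b → ∀ (s : Bool),
        (∑ o, kD b c (s, o)) = if s = s' then 1 else 0 := by
      intro b hb s
      by_cases hss : s = s'
      · subst hss
        have h0 : (∑ o, kD b c (!s, o)) = 0 :=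
          (hKey a c ha hc b hb s t' he).2 (!s) (Bool.not_ne_self s)
        have hsum := hDvsum b c
        rw [if_pos rfl]
        cases s
        · simp only [Bool.not_false] at h0
          rw [h0] at hsum
          linarith
        · simp only [Bool.not_true] at h0
          rw [h0] at hsum
          linarith
      · rw [if_neg hss]
        exact (hKey a c ha hc b hb s' t' he).2 s hss
    rw [hval b hb s, hval b' hb' s]
  -- the marginal of S₂ depends only on a (on positive-probability points)
  have hFfix : ∀ a, 0 < pA a → ∀ (t : Bool) b b', 0 < pB b → 0 < pB b' →
      (∑ o, kF a b (t, o)) = ∑ o, kF a b' (t, o) := by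
    intro a ha t b b' hb hb'
    obtain ⟨c, hc⟩ := hCpos
    obtain ⟨s', t', he⟩ := hEpos a c
    have hval : ∀ b, 0 < pB b → ∀ (t : Bool),
        (∑ o, kF a b (t, o)) = if t = t' then 1 else 0 := by
      intro b hb t
      by_cases htt : t = t'
      · subst htt
        have h0 : (∑ o, kF a b (!t, o)) = 0 :=
          (hKey a c ha hc b hb s' t he).1 (!t) (Bool.not_ne_self t)
        have hsum := hFvsum a b
        rw [if_pos rfl]
        cases t
        · simp only [Bool.not_false] at h0
          rw [h0] at hsum
          linarith
        · simp only [Bool.not_true] at h0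
          rw [h0] at hsum
          linarith
      · rw [if_neg htt]
        exact (hKey a c ha hc b hb s' t' he).1 t htt
    rw [hval b hb t, hval b' hb' t]
  -- marginal computations
  have hM1 : (∑ a, ∑ b', ∑ c, ∑ o₁', ∑ e, ∑ f, Q a b' c (s₁, o₁') e f)
      = ∑ b', pB b' * ∑ c, pC c * ∑ o, kD b' c (s₁, o) := by
    simp only [hQ, hF1, hE1, ← Finset.mul_sum]
    rw [Finset.sum_comm]
    refine Finset.sum_congr rfl fun b' _ => ?_
    have hrow : ∀ a, (∑ c, pA a * pB b' * pC c * ∑ o, kD b' c (s₁, o))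
        = pA a * (pB b' * ∑ c, pC c * ∑ o, kD b' c (s₁, o)) := by
      intro a
      rw [Finset.mul_sum, Finset.mul_sum]
      exact Finset.sum_congr rfl fun c _ => by ring
    rw [Finset.sum_congr rfl fun a _ => hrow a, hAone]
  have hM2 : (∑ a, ∑ b', ∑ c, ∑ d, ∑ e, ∑ o₂', Q a b' c d e (s₂, o₂'))
      = ∑ a, pA a * ∑ b', pB b' * ∑ o, kF a b' (s₂, o) := by
    simp only [hQ, ← Finset.mul_sum, hE2, hD2]
    have hrow : ∀ a b', (∑ c, pA a * pB b' * pC c * ∑ o, kF a b' (s₂, o))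
        = pA a * (pB b' * ∑ o, kF a b' (s₂, o)) := by
      intro a b'
      rw [← hCone (pA a * (pB b' * ∑ o, kF a b' (s₂, o)))]
      exact Finset.sum_congr rfl fun c _ => by ring
    simp only [hrow, ← Finset.mul_sum]
  have hN1 : ∀ b, (∑ a, ∑ c, ∑ e, ∑ f, Q a b c (s₁, o₁) e f)
      = pB b * ∑ c, pC c * kD b c (s₁, o₁) := by
    intro b
    simp only [hQ, hF1, hE1]
    have hrow : ∀ a, (∑ c, pA a * pB b * pC c * kD b c (s₁, o₁))
        = pA a * (pB b * ∑ c, pC c * kD b c (s₁, o₁)) := by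
      intro a
      rw [Finset.mul_sum, Finset.mul_sum]
      exact Finset.sum_congr rfl fun c _ => by ring
    rw [Finset.sum_congr rfl fun a _ => hrow a, hAone]
  have hDen1 : ∀ b, (∑ a, ∑ c, ∑ o₁', ∑ e, ∑ f, Q a b c (s₁, o₁') e f)
      = pB b * ∑ c, pC c * ∑ o, kD b c (s₁, o) := by
    intro b
    simp only [hQ, hF1, hE1, ← Finset.mul_sum]
    have hrow : ∀ a, (∑ c, pA a * pB b * pC c * ∑ o, kD b c (s₁, o))
        = pA a * (pB b * ∑ c, pC c * ∑ o, kD b c (s₁, o)) := by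
      intro a
      rw [Finset.mul_sum, Finset.mul_sum]
      exact Finset.sum_congr rfl fun c _ => by ring
    rw [Finset.sum_congr rfl fun a _ => hrow a, hAone]
  have hN2 : ∀ b, (∑ a, ∑ c, ∑ d, ∑ e, Q a b c d e (s₂, o₂))
      = pB b * ∑ a, pA a * kF a b (s₂, o₂) := by
    intro b
    simp only [hQ, hE2, hD2]
    have hrow : ∀ a, (∑ c, pA a * pB b * pC c * kF a b (s₂, o₂))
        = pB b * (pA a * kF a b (s₂, o₂)) := by
      intro a
      rw [← hCone (pB b * (pA a * kF a b (s₂, o₂)))]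
      exact Finset.sum_congr rfl fun c _ => by ring
    simp only [hrow, ← Finset.mul_sum]
  have hDen2 : ∀ b, (∑ a, ∑ c, ∑ d, ∑ e, ∑ o₂', Q a b c d e (s₂, o₂'))
      = pB b * ∑ a, pA a * ∑ o, kF a b (s₂, o) := by
    intro b
    simp only [hQ, ← Finset.mul_sum, hE2, hD2]
    have hrow : ∀ a, (∑ c, pA a * pB b * pC c * ∑ o, kF a b (s₂, o))
        = pB b * (pA a * ∑ o, kF a b (s₂, o)) := by
      intro a
      rw [← hCone (pB b * (pA a * ∑ o, kF a b (s₂, o)))]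
      exact Finset.sum_congr rfl fun c _ => by ring
    simp only [hrow, ← Finset.mul_sum]
  have hLHS : (∑ a, ∑ b, ∑ c, ∑ e, Q a b c (s₁, o₁) e (s₂, o₂))
      = ∑ b, pB b * (∑ c, pC c * kD b c (s₁, o₁)) * (∑ a, pA a * kF a b (s₂, o₂)) := by
    simp only [hQ, hE2]
    rw [Finset.sum_comm]
    refine Finset.sum_congr rfl fun b _ => ?_
    have hrow : ∀ a, (∑ c, pA a * pB b * pC c * kD b c (s₁, o₁) * kF a b (s₂, o₂))
        = pA a * kF a b (s₂, o₂) * (pB b * ∑ c, pC c * kD b c (s₁, o₁)) := by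
      intro a
      rw [Finset.mul_sum, Finset.mul_sum]
      exact Finset.sum_congr rfl fun c _ => by ring
    rw [Finset.sum_congr rfl fun a _ => hrow a, ← Finset.sum_mul]
    ring
  -- assemble
  rw [hLHS]
  simp only [hM1, hM2, hN1, hDen1, hN2, hDen2]
  refine Finset.sum_congr rfl fun b _ => ?_
  rcases (hpB0 b).lt_or_eq with hb | hb
  · -- the two key identities: denominators equal the marginals
    have hd1 : (∑ b', pB b' * ∑ c, pC c * ∑ o, kD b' c (s₁, o))
        = ∑ c, pC c * ∑ o, kD b c (s₁, o) := by
      calc (∑ b', pB b' * ∑ c, pC c * ∑ o, kD b' c (s₁, o))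
          = ∑ b', pB b' * ∑ c, pC c * ∑ o, kD b c (s₁, o) := by
            refine Finset.sum_congr rfl fun b' _ => ?_
            rcases (hpB0 b').lt_or_eq with hb' | hb'
            · congr 1
              refine Finset.sum_congr rfl fun c _ => ?_
              rcases (hpC0 c).lt_or_eq with hc | hc
              · rw [hDfix c hc s₁ b' b hb' hb]
              · rw [← hc, zero_mul, zero_mul]
            · rw [← hb', zero_mul, zero_mul]
        _ = _ := hBone _
    have hd2 : (∑ a, pA a * ∑ b', pB b' * ∑ o, kF a b' (s₂, o))
        = ∑ a, pA a * ∑ o, kF a b (s₂, o) := by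
      refine Finset.sum_congr rfl fun a _ => ?_
      rcases (hpA0 a).lt_or_eq with ha | ha
      · congr 1
        calc (∑ b', pB b' * ∑ o, kF a b' (s₂, o))
            = ∑ b', pB b' * ∑ o, kF a b (s₂, o) := by
              refine Finset.sum_congr rfl fun b' _ => ?_
              rcases (hpB0 b').lt_or_eq with hb' | hb'
              · rw [hFfix a ha s₂ b' b hb' hb]
              · rw [← hb', zero_mul, zero_mul]
          _ = _ := hBone _
      · rw [← ha, zero_mul, zero_mul]
    rw [hd1, hd2, mul_div_mul_left _ _ (ne_of_gt hb), mul_div_mul_left _ _ (ne_of_gt hb)]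
    by_cases h1 : (∑ c, pC c * ∑ o, kD b c (s₁, o)) = 0
    · have hn1 : (∑ c, pC c * kD b c (s₁, o₁)) = 0 := by
        have hle : (∑ c, pC c * kD b c (s₁, o₁)) ≤ ∑ c, pC c * ∑ o, kD b c (s₁, o) :=
          Finset.sum_le_sum fun c _ => mul_le_mul_of_nonneg_left
            (Finset.single_le_sum (fun o _ => hkD0 b c (s₁, o)) (Finset.mem_univ o₁))
            (hpC0 c)
        have hge : (0:ℝ) ≤ ∑ c, pC c * kD b c (s₁, o₁) :=
          Finset.sum_nonneg fun c _ => mul_nonneg (hpC0 c) (hkD0 b c (s₁, o₁))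
        rw [h1] at hle
        linarith
      rw [hn1, h1]
      simp
    by_cases h2 : (∑ a, pA a * ∑ o, kF a b (s₂, o)) = 0
    · have hn2 : (∑ a, pA a * kF a b (s₂, o₂)) = 0 := by
        have hle : (∑ a, pA a * kF a b (s₂, o₂)) ≤ ∑ a, pA a * ∑ o, kF a b (s₂, o) :=
          Finset.sum_le_sum fun a _ => mul_le_mul_of_nonneg_left
            (Finset.single_le_sum (fun o _ => hkF0 a b (s₂, o)) (Finset.mem_univ o₂))
            (hpA0 a)
        have hge : (0:ℝ) ≤ ∑ a, pA a * kF a b (s₂, o₂) :=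
          Finset.sum_nonneg fun a _ => mul_nonneg (hpA0 a) (hkF0 a b (s₂, o₂))
        rw [h2] at hle
        linarith
      rw [hn2, h2]
      simp
    have key : ∀ (p x y u v : ℝ), u ≠ 0 → v ≠ 0 →
        p * u * v * (x / u) * (y / v) = p * x * y := by
      intro p x y u v hu hv
      field_simp
    exact (key (pB b) _ _ _ _ h1 h2).symm
  · rw [← hb]
    simp
end

section
/- For any random variables over a finite hidden variable b with distribution μ, and deterministic response functions, the CHSH correlator bound holds: for functions f, g : Λ × {0,1} → {−1,1}, one has |E[f(Λ,0)g(Λ,0)] + E[f(Λ,0)g(Λ,1)] + E[f(Λ,1)g(Λ,0)] − E[f(Λ,1)g(Λ,1)]| ≤ 2, where E denotes expectation over Λ ∼ μ. -/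
/-- the deterministic-strategy core of the CHSH inequality:
for `±1`-valued response functions `f, g` of a hidden variable `Λ ∼ μ`,
`|E[f₀g₀] + E[f₀g₁] + E[f₁g₀] − E[f₁g₁]| ≤ 2`. -/
theorem stmt_12 {Λ : Type} [Fintype Λ]
    (μ : Λ → ℝ) (hμ0 : ∀ l, 0 ≤ μ l) (hμ1 : ∑ l, μ l = 1)
    (f g : Λ → Bool → ℝ)
    (hf : ∀ l x, f l x = 1 ∨ f l x = -1)
    (hg : ∀ l y, g l y = 1 ∨ g l y = -1) :
    |(∑ l, μ l * f l false * g l false) + (∑ l, μ l * f l false * g l true) +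
     (∑ l, μ l * f l true * g l false) - (∑ l, μ l * f l true * g l true)|
      ≤ 2 := by
  have key : (∑ l, μ l * f l false * g l false) + (∑ l, μ l * f l false * g l true) +
      (∑ l, μ l * f l true * g l false) - (∑ l, μ l * f l true * g l true)
      = ∑ l, μ l * (f l false * g l false + f l false * g l true +
        f l true * g l false - f l true * g l true) := by
    rw [← Finset.sum_add_distrib, ← Finset.sum_add_distrib, ← Finset.sum_sub_distrib]
    exact Finset.sum_congr rfl fun l _ => by ring
  rw [key]
  calc |∑ l, μ l * (f l false * g l false + f l false * g l true +
        f l true * g l false - f l true * g l true)|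
      ≤ ∑ l, |μ l * (f l false * g l false + f l false * g l true +
        f l true * g l false - f l true * g l true)| := Finset.abs_sum_le_sum_abs _ _
    _ ≤ ∑ l, μ l * 2 := by
        apply Finset.sum_le_sum
        intro l _
        rw [abs_mul, abs_of_nonneg (hμ0 l)]
        apply mul_le_mul_of_nonneg_left _ (hμ0 l)
        rcases hf l false with h1 | h1 <;> rcases hf l true with h2 | h2 <;>
          rcases hg l false with h3 | h3 <;> rcases hg l true with h4 | h4 <;>
          rw [h1, h2, h3, h4] <;> norm_num
    _ = 2 := by rw [← Finset.sum_mul, hμ1, one_mul]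
end

section
/- Let Q be a probability distribution on finite variables A,B,C,D,E,F with F=(F_O,F_S), factorizing as Q(a,b,c,d,e,f)=Q(a)Q(b)Q(c)Q(d|b,c)Q(e|a,c,d)Q(f|a,b), with F_S = E almost surely and Q(e|c,d)=Q(e) whenever Q(c,d)>0. Then Q(f_O|b,c,d,e) = Q(f_O|b,e) whenever Q(b,c,d,e) > 0. -/
/-- in the setting of Lemma 1 of the paper,
`Q(f_O|b,c,d,e) = Q(f_O|b,e)` whenever `Q(b,c,d,e) > 0`. -/
theorem stmt_15 {A B C D E FO : Type} [Fintype A] [Fintype B] [Fintype C]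
    [Fintype D] [Fintype E] [Fintype FO]
    (pA : A → ℝ) (pB : B → ℝ) (pC : C → ℝ)
    (kD : B → C → D → ℝ) (kE : A → C → D → E → ℝ) (kF : A → B → FO × E → ℝ)
    (hpA0 : ∀ a, 0 ≤ pA a) (hpA1 : ∑ a, pA a = 1)
    (hpB0 : ∀ b, 0 ≤ pB b) (hpB1 : ∑ b, pB b = 1)
    (hpC0 : ∀ c, 0 ≤ pC c) (hpC1 : ∑ c, pC c = 1)
    (hkD0 : ∀ b c d, 0 ≤ kD b c d) (hkD1 : ∀ b c, ∑ d, kD b c d = 1)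
    (hkE0 : ∀ a c d e, 0 ≤ kE a c d e) (hkE1 : ∀ a c d, ∑ e, kE a c d e = 1)
    (hkF0 : ∀ a b f, 0 ≤ kF a b f) (hkF1 : ∀ a b, ∑ f, kF a b f = 1)
    (Q : A → B → C → D → E → FO × E → ℝ)
    (hQ : ∀ a b c d e f,
      Q a b c d e f = pA a * pB b * pC c * kD b c d * kE a c d e * kF a b f)
    -- Condition 1: `F_S = E` almost surely
    (hFS : ∀ a b c d e f₀ fS, fS ≠ e → Q a b c d e (f₀, fS) = 0)
    -- Condition 2: `Q(e|c,d) = Q(e)` whenever `Q(c,d) > 0`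
    (hEind : ∀ c d e, (∑ a, ∑ b, ∑ e', ∑ f, Q a b c d e' f) > 0 →
      (∑ a, ∑ b, ∑ f, Q a b c d e f) / (∑ a, ∑ b, ∑ e', ∑ f, Q a b c d e' f) =
      ∑ a, ∑ b, ∑ c', ∑ d', ∑ f, Q a b c' d' e f) :
    ∀ b c d e f₀, (∑ a, ∑ f, Q a b c d e f) > 0 →
      (∑ a, ∑ fS, Q a b c d e (f₀, fS)) / (∑ a, ∑ f, Q a b c d e f) =
      (∑ a, ∑ c', ∑ d', ∑ fS, Q a b c' d' e (f₀, fS)) /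
        (∑ a, ∑ c', ∑ d', ∑ f, Q a b c' d' e f) := by
  intro b c d e f₀ hpos
  -- collapse the sum over fS using hFS
  have hcol : ∀ (a : A) (c' : C) (d' : D) (g : FO),
      ∑ fS, Q a b c' d' e (g, fS) = Q a b c' d' e (g, e) := by
    intro a c' d' g
    exact Finset.sum_eq_single e (fun fS _ hne => hFS a b c' d' e g fS hne)
      (fun h => absurd (Finset.mem_univ e) h)
  -- expanded form of the denominator on the left
  have h2 : ∑ a, ∑ f, Q a b c d e f =
      pB b * pC c * kD b c d * ∑ a, pA a * (kE a c d e * ∑ g, kF a b (g, e)) := by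
    rw [Finset.mul_sum]
    refine Finset.sum_congr rfl fun a _ => ?_
    rw [Fintype.sum_prod_type]
    rw [Finset.sum_congr rfl fun g (_ : g ∈ Finset.univ) => hcol a c d g]
    simp only [hQ, Finset.mul_sum]
    exact Finset.sum_congr rfl fun g _ => by ring
  have hp2 := hpos
  rw [h2] at hp2
  have hS2nn : 0 ≤ ∑ a, pA a * (kE a c d e * ∑ g, kF a b (g, e)) :=
    Finset.sum_nonneg fun a _ => mul_nonneg (hpA0 a) (mul_nonneg (hkE0 a c d e)
      (Finset.sum_nonneg fun g _ => hkF0 a b (g, e)))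
  have hPnn : 0 ≤ pB b * pC c * kD b c d :=
    mul_nonneg (mul_nonneg (hpB0 b) (hpC0 c)) (hkD0 b c d)
  have hP : 0 < pB b * pC c * kD b c d := by nlinarith
  have hS2 : 0 < ∑ a, pA a * (kE a c d e * ∑ g, kF a b (g, e)) := by nlinarith
  have hb : 0 < pB b := by
    rcases (hpB0 b).lt_or_eq with h | h
    · exact h
    · exfalso; rw [← h] at hP; simp at hP
  have hc : 0 < pC c := by
    rcases (hpC0 c).lt_or_eq with h | h
    · exact h
    · exfalso; rw [← h] at hP; simp at hP
  have hd : 0 < kD b c d := by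
    rcases (hkD0 b c d).lt_or_eq with h | h
    · exact h
    · exfalso; rw [← h] at hP; simp at hP
  -- key vanishing lemma from F_S = E a.s.
  have hvanish : ∀ (a : A) (c' : C) (d' : D) (e' : E), 0 < pA a → 0 < pC c' →
      0 < kD b c' d' → 0 < kE a c' d' e' →
      ∀ (g : FO) (fS : E), fS ≠ e' → kF a b (g, fS) = 0 := by
    intro a c' d' e' ha hc' hd' hke g fS hne
    have h0 := hFS a b c' d' e' g fS hne
    rw [hQ] at h0
    have hp : 0 < pA a * pB b * pC c' * kD b c' d' * kE a c' d' e' :=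
      mul_pos (mul_pos (mul_pos (mul_pos ha hb) hc') hd') hke
    rcases mul_eq_zero.mp h0 with h | h
    · exact absurd h hp.ne'
    · exact h
  -- conditional on a (in support), E is deterministic
  have hsingle : ∀ (a : A) (c₁ : C) (d₁ : D) (e₁ : E) (c₂ : C) (d₂ : D) (e₂ : E),
      0 < pA a → 0 < pC c₁ → 0 < kD b c₁ d₁ → 0 < kE a c₁ d₁ e₁ →
      0 < pC c₂ → 0 < kD b c₂ d₂ → 0 < kE a c₂ d₂ e₂ → e₁ = e₂ := by
    intro a c₁ d₁ e₁ c₂ d₂ e₂ ha h1 h2' h3 h4 h5 h6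
    by_contra hne
    have hz : ∀ f : FO × E, kF a b f = 0 := by
      rintro ⟨g, fS⟩
      by_cases h : fS = e₁
      · exact hvanish a c₂ d₂ e₂ ha h4 h5 h6 g fS (fun hh => hne (h ▸ hh))
      · exact hvanish a c₁ d₁ e₁ ha h1 h2' h3 g fS h
    have hh := hkF1 a b
    rw [Finset.sum_eq_zero (fun f _ => hz f)] at hh
    exact one_ne_zero hh.symm
  -- on the support, kE a · · e is identically 1 (given it is positive at (c,d))
  have hone : ∀ (a : A), 0 < pA a → 0 < kE a c d e → ∀ (c' : C) (d' : D),
      0 < pC c' → 0 < kD b c' d' → kE a c' d' e = 1 := by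
    intro a ha hke c' d' hc' hd'
    have hz : ∀ e', e' ≠ e → kE a c' d' e' = 0 := by
      intro e' hne
      rcases (hkE0 a c' d' e').lt_or_eq with h | h
      · exact absurd (hsingle a c' d' e' c d e ha hc' hd' h hc hd hke) hne
      · exact h.symm
    have hh := hkE1 a c' d'
    rwa [Finset.sum_eq_single e (fun e' _ h => hz e' h)
      (fun h => absurd (Finset.mem_univ e) h)] at hh
  -- case analysis for each a
  have hcase : ∀ a : A, 0 < pA a →
      (∀ g : FO, kF a b (g, e) = 0) ∨
      (kE a c d e = 1 ∧ ∑ c', ∑ d', pC c' * (kD b c' d' * kE a c' d' e) = 1) := by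
    intro a ha
    rcases (hkE0 a c d e).lt_or_eq with hke | hke
    · right
      refine ⟨hone a ha hke c d hc hd, ?_⟩
      have hterm : ∀ c' d', pC c' * (kD b c' d' * kE a c' d' e) = pC c' * kD b c' d' := by
        intro c' d'
        rcases (hpC0 c').lt_or_eq with h1 | h1
        · rcases (hkD0 b c' d').lt_or_eq with h2' | h2'
          · rw [hone a ha hke c' d' h1 h2']; ring
          · rw [← h2']; ring
        · rw [← h1]; ring
      simp only [hterm]
      have hfac : ∑ c', ∑ d', pC c' * kD b c' d' = ∑ c', pC c' * ∑ d', kD b c' d' :=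
        Finset.sum_congr rfl fun c' _ => (Finset.mul_sum _ _ _).symm
      rw [hfac]
      simp only [hkD1, mul_one]
      exact hpC1
    · left
      obtain ⟨e', he'⟩ : ∃ e', 0 < kE a c d e' := by
        by_contra h
        push_neg at h
        have hz : ∀ e', kE a c d e' = 0 := fun e' => le_antisymm (h e') (hkE0 a c d e')
        have h1 := hkE1 a c d
        rw [Finset.sum_eq_zero (fun e' _ => hz e')] at h1
        exact one_ne_zero h1.symm
      have hne : e ≠ e' := fun h => he'.ne' (h ▸ hke).symm
      exact fun g => hvanish a c d e' ha hc hd he' g e hne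
  -- the central sum identity
  have hEq : ∀ (X : A → ℝ), (∀ a, (∀ g, kF a b (g, e) = 0) → X a = 0) →
      ∑ a, pA a * (kE a c d e * X a) =
      ∑ a, pA a * ((∑ c', ∑ d', pC c' * (kD b c' d' * kE a c' d' e)) * X a) := by
    intro X hX
    refine Finset.sum_congr rfl fun a _ => ?_
    rcases (hpA0 a).lt_or_eq with ha | ha
    · rcases hcase a ha with h | ⟨ha1, ha2⟩
      · rw [hX a h]; ring
      · rw [ha1, ha2]
    · rw [← ha]; ring
  have hEqu := hEq (fun a => kF a b (f₀, e)) (fun a h => h f₀)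
  have hEqv := hEq (fun a => ∑ g, kF a b (g, e))
    (fun a h => Finset.sum_eq_zero fun g _ => h g)
  -- expanded forms of the remaining three sums
  have h1 : ∑ a, ∑ fS, Q a b c d e (f₀, fS) =
      pB b * pC c * kD b c d * ∑ a, pA a * (kE a c d e * kF a b (f₀, e)) := by
    rw [Finset.mul_sum]
    refine Finset.sum_congr rfl fun a _ => ?_
    rw [hcol a c d f₀, hQ]; ring
  have h3 : ∑ a, ∑ c', ∑ d', ∑ fS, Q a b c' d' e (f₀, fS) =
      pB b * ∑ a, pA a *
        ((∑ c', ∑ d', pC c' * (kD b c' d' * kE a c' d' e)) * kF a b (f₀, e)) := by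
    rw [Finset.mul_sum]
    refine Finset.sum_congr rfl fun a _ => ?_
    have e2 : (∑ c', ∑ d', pC c' * (kD b c' d' * kE a c' d' e)) * kF a b (f₀, e) =
        ∑ c', ∑ d', pC c' * (kD b c' d' * kE a c' d' e) * kF a b (f₀, e) := by
      rw [Finset.sum_mul]
      exact Finset.sum_congr rfl fun c' _ => Finset.sum_mul _ _ _
    rw [e2]
    simp only [hcol]
    simp only [hQ, Finset.mul_sum]
    exact Finset.sum_congr rfl fun c' _ => Finset.sum_congr rfl fun d' _ => by ring
  have h4 : ∑ a, ∑ c', ∑ d', ∑ f, Q a b c' d' e f =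
      pB b * ∑ a, pA a *
        ((∑ c', ∑ d', pC c' * (kD b c' d' * kE a c' d' e)) * ∑ g, kF a b (g, e)) := by
    rw [Finset.mul_sum]
    refine Finset.sum_congr rfl fun a _ => ?_
    have e1 : (∑ c', ∑ d', pC c' * (kD b c' d' * kE a c' d' e)) * (∑ g, kF a b (g, e)) =
        ∑ c', ∑ d', ∑ g, pC c' * (kD b c' d' * kE a c' d' e) * kF a b (g, e) := by
      rw [Finset.sum_mul]
      refine Finset.sum_congr rfl fun c' _ => ?_
      rw [Finset.sum_mul]
      refine Finset.sum_congr rfl fun d' _ => Finset.mul_sum _ _ _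
    rw [e1]
    simp only [Fintype.sum_prod_type, hcol]
    simp only [hQ, Finset.mul_sum]
    exact Finset.sum_congr rfl fun c' _ => Finset.sum_congr rfl fun d' _ =>
      Finset.sum_congr rfl fun g _ => by ring
  rw [h1, h2, h3, h4, hEqu, hEqv,
    mul_div_mul_left _ _ hP.ne', mul_div_mul_left _ _ hb.ne']
end

section
/- Let Q be a probability distribution on finite variables A,B,C,D,E,F with F=(F_O,F_S), factorizing as Q(a,b,c,d,e,f)=Q(a)Q(b)Q(c)Q(d|b,c)Q(e|a,c,d)Q(f|a,b), with F_S = E almost surely and Q(e|c,d)=Q(e) whenever Q(c,d)>0. Then E is independent of B: Q(e|b) = Q(e) whenever Q(b) > 0. -/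
/-- in the setting of Lemma 1 of the paper, `E` is independent
of `B`: `Q(e|b) = Q(e)` whenever `Q(b) > 0`. -/
theorem stmt_16 {A B C D E FO : Type} [Fintype A] [Fintype B] [Fintype C]
    [Fintype D] [Fintype E] [Fintype FO]
    (pA : A → ℝ) (pB : B → ℝ) (pC : C → ℝ)
    (kD : B → C → D → ℝ) (kE : A → C → D → E → ℝ) (kF : A → B → FO × E → ℝ)
    (hpA0 : ∀ a, 0 ≤ pA a) (hpA1 : ∑ a, pA a = 1)
    (hpB0 : ∀ b, 0 ≤ pB b) (hpB1 : ∑ b, pB b = 1)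
    (hpC0 : ∀ c, 0 ≤ pC c) (hpC1 : ∑ c, pC c = 1)
    (hkD0 : ∀ b c d, 0 ≤ kD b c d) (hkD1 : ∀ b c, ∑ d, kD b c d = 1)
    (hkE0 : ∀ a c d e, 0 ≤ kE a c d e) (hkE1 : ∀ a c d, ∑ e, kE a c d e = 1)
    (hkF0 : ∀ a b f, 0 ≤ kF a b f) (hkF1 : ∀ a b, ∑ f, kF a b f = 1)
    (Q : A → B → C → D → E → FO × E → ℝ)
    (hQ : ∀ a b c d e f,
      Q a b c d e f = pA a * pB b * pC c * kD b c d * kE a c d e * kF a b f)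
    -- Condition 1: `F_S = E` almost surely
    (hFS : ∀ a b c d e f₀ fS, fS ≠ e → Q a b c d e (f₀, fS) = 0)
    -- Condition 2: `Q(e|c,d) = Q(e)` whenever `Q(c,d) > 0`
    (hEind : ∀ c d e, (∑ a, ∑ b, ∑ e', ∑ f, Q a b c d e' f) > 0 →
      (∑ a, ∑ b, ∑ f, Q a b c d e f) / (∑ a, ∑ b, ∑ e', ∑ f, Q a b c d e' f) =
      ∑ a, ∑ b, ∑ c', ∑ d', ∑ f, Q a b c' d' e f) :
    ∀ b e, (∑ a, ∑ c, ∑ d, ∑ e', ∑ f, Q a b c d e' f) > 0 →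
      (∑ a, ∑ c, ∑ d, ∑ f, Q a b c d e f) /
        (∑ a, ∑ c, ∑ d, ∑ e', ∑ f, Q a b c d e' f) =
      ∑ a, ∑ b', ∑ c, ∑ d, ∑ f, Q a b' c d e f := by
  intro b e hpos
  set g : C → D → E → ℝ := fun c d e => ∑ a, pA a * kE a c d e with hg
  set w : C → D → ℝ := fun c d => pC c * ∑ b', pB b' * kD b' c d with hw
  have hFcol : ∀ a b (x : ℝ), (∑ f : FO × E, x * kF a b f) = x := by
    intro a b x; rw [← Finset.mul_sum, hkF1, mul_one]
  -- L1 : Q(b,e') marginal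
  have L1 : ∀ e', (∑ a, ∑ c, ∑ d, ∑ f, Q a b c d e' f)
      = pB b * ∑ c, ∑ d, pC c * kD b c d * g c d e' := by
    intro e'
    simp only [hQ, hFcol]
    rw [Finset.sum_comm, Finset.mul_sum]
    refine Finset.sum_congr rfl fun c _ => ?_
    rw [Finset.sum_comm, Finset.mul_sum]
    refine Finset.sum_congr rfl fun d _ => ?_
    rw [hg]
    simp only [Finset.mul_sum]
    exact Finset.sum_congr rfl fun a _ => by ring
  -- L2 : Q(b) = pB b
  have L2 : (∑ a, ∑ c, ∑ d, ∑ e', ∑ f, Q a b c d e' f) = pB b := by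
    simp only [hQ, hFcol]
    have hEcol : ∀ a c d, (∑ e', pA a * pB b * pC c * kD b c d * kE a c d e')
        = pA a * pB b * pC c * kD b c d := by
      intro a c d; rw [← Finset.mul_sum, hkE1, mul_one]
    have hDcol : ∀ a c, (∑ d, pA a * pB b * pC c * kD b c d)
        = pA a * pB b * pC c := by
      intro a c; rw [← Finset.mul_sum, hkD1, mul_one]
    have hCcol : ∀ a, (∑ c, pA a * pB b * pC c) = pA a * pB b := by
      intro a; rw [← Finset.mul_sum, hpC1, mul_one]
    simp only [hEcol, hDcol, hCcol]
    rw [← Finset.sum_mul, hpA1, one_mul]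
  -- generic 4-fold swap
  have swap4 : ∀ (T : A → B → C → D → ℝ),
      (∑ a, ∑ b', ∑ c, ∑ d, T a b' c d) = ∑ c, ∑ d, ∑ a, ∑ b', T a b' c d := by
    intro T
    calc (∑ a, ∑ b', ∑ c, ∑ d, T a b' c d)
        = ∑ a, ∑ c, ∑ b', ∑ d, T a b' c d :=
          Finset.sum_congr rfl fun a _ => Finset.sum_comm
      _ = ∑ c, ∑ a, ∑ b', ∑ d, T a b' c d := Finset.sum_comm
      _ = ∑ c, ∑ a, ∑ d, ∑ b', T a b' c d :=
          Finset.sum_congr rfl fun c _ =>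
            Finset.sum_congr rfl fun a _ => Finset.sum_comm
      _ = ∑ c, ∑ d, ∑ a, ∑ b', T a b' c d :=
          Finset.sum_congr rfl fun c _ => Finset.sum_comm
  -- inner factorization over (a, b')
  have inner : ∀ c d e',
      (∑ a, ∑ b', pA a * pB b' * pC c * kD b' c d * kE a c d e')
        = w c d * g c d e' := by
    intro c d e'
    calc (∑ a, ∑ b', pA a * pB b' * pC c * kD b' c d * kE a c d e')
        = ∑ a, (pA a * kE a c d e') * (pC c * ∑ b', pB b' * kD b' c d) := by
          refine Finset.sum_congr rfl fun a _ => ?_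
          simp only [Finset.mul_sum, Finset.sum_mul]
          exact Finset.sum_congr rfl fun b' _ => by ring
      _ = (∑ a, pA a * kE a c d e') * (pC c * ∑ b', pB b' * kD b' c d) :=
          by rw [Finset.sum_mul]
      _ = w c d * g c d e' := by rw [hw, hg]; ring
  -- L3 : Q(e') marginal
  have L3 : ∀ e', (∑ a, ∑ b', ∑ c, ∑ d, ∑ f, Q a b' c d e' f)
      = ∑ c, ∑ d, w c d * g c d e' := by
    intro e'
    simp only [hQ, hFcol]
    rw [swap4 (fun a b' c d => pA a * pB b' * pC c * kD b' c d * kE a c d e')]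
    exact Finset.sum_congr rfl fun c _ => Finset.sum_congr rfl fun d _ => inner c d e'
  -- L4num : Q(c,d,e)
  have L4num : ∀ c d e', (∑ a, ∑ b', ∑ f, Q a b' c d e' f) = w c d * g c d e' := by
    intro c d e'
    simp only [hQ, hFcol]
    exact inner c d e'
  -- L4den : Q(c,d)
  have L4den : ∀ c d, (∑ a, ∑ b', ∑ e', ∑ f, Q a b' c d e' f) = w c d := by
    intro c d
    simp only [hQ, hFcol]
    have hEcol : ∀ a b' , (∑ e', pA a * pB b' * pC c * kD b' c d * kE a c d e')
        = pA a * pB b' * pC c * kD b' c d := by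
      intro a b'; rw [← Finset.mul_sum, hkE1, mul_one]
    simp only [hEcol]
    calc (∑ a, ∑ b', pA a * pB b' * pC c * kD b' c d)
        = ∑ a, pA a * w c d := by
          refine Finset.sum_congr rfl fun a _ => ?_
          rw [hw]
          simp only [Finset.mul_sum]
          exact Finset.sum_congr rfl fun b' _ => by ring
      _ = (∑ a, pA a) * w c d := by rw [Finset.sum_mul]
      _ = w c d := by rw [hpA1, one_mul]
  -- positivity of pB b
  have hpb : 0 < pB b := by rwa [L2] at hpos
  set R : ℝ := ∑ a, ∑ b', ∑ c, ∑ d, ∑ f, Q a b' c d e f with hR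
  -- per-term equality
  have termeq : ∀ c ∈ Finset.univ, ∀ d ∈ (Finset.univ : Finset D),
      pC c * kD b c d * g c d e = pC c * kD b c d * R := by
    intro c _ d _
    by_cases h0 : pC c * kD b c d = 0
    · rw [h0, zero_mul, zero_mul]
    · have hc : 0 < pC c :=
        (hpC0 c).lt_of_ne (Ne.symm (mul_ne_zero_iff.mp h0).1)
      have hkd : 0 < kD b c d :=
        (hkD0 b c d).lt_of_ne (Ne.symm (mul_ne_zero_iff.mp h0).2)
      have hsum : pB b * kD b c d ≤ ∑ b', pB b' * kD b' c d :=
        Finset.single_le_sum (fun b' _ => mul_nonneg (hpB0 b') (hkD0 b' c d))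
          (Finset.mem_univ b)
      have hwpos : 0 < w c d :=
        mul_pos hc (lt_of_lt_of_le (mul_pos hpb hkd) hsum)
      have hE := hEind c d e (by rw [L4den]; exact hwpos)
      rw [L4num, L4den] at hE
      rw [mul_comm (w c d), mul_div_assoc, div_self hwpos.ne', mul_one] at hE
      rw [hE, ← hR]
  -- finish
  rw [L1 e, L2, mul_comm, mul_div_assoc, div_self hpb.ne', mul_one]
  calc (∑ c, ∑ d, pC c * kD b c d * g c d e)
      = ∑ c, ∑ d, pC c * kD b c d * R :=
        Finset.sum_congr rfl fun c hc => Finset.sum_congr rfl (termeq c hc)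
    _ = (∑ c, ∑ d, pC c * kD b c d) * R := by
        rw [Finset.sum_mul]
        exact Finset.sum_congr rfl fun c _ => by rw [Finset.sum_mul]
    _ = R := by
        have : (∑ c, ∑ d, pC c * kD b c d) = 1 := by
          have : ∀ c, (∑ d, pC c * kD b c d) = pC c := by
            intro c; rw [← Finset.mul_sum, hkD1, mul_one]
          simp only [this, hpC1]
        rw [this, one_mul]
end

section
/- Suppose P(c,e,f_O,d) on binary variables satisfies P(c,e) > 0 for all c,e and the CHSH-type bound is violated: P(D=F_O|c=0,e=0)+P(D=F_O|c=0,e=1)+P(D=F_O|c=1,e=0)+P(D≠F_O|c=1,e=1) > 3. Then P cannot be written in the local form P(c,d,e,f_O) = \sum_b Q(b)Q(c)Q(d|b,c)Q(e)Q(f_O|b,e) with Q(c),Q(e) > 0 for all c,e. -/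
lemma chsh4 (a b u v : ℝ) (ha : 0 ≤ a) (ha1 : a ≤ 1) (hb : 0 ≤ b) (hb1 : b ≤ 1)
    (hu : 0 ≤ u) (hu1 : u ≤ 1) (hv : 0 ≤ v) (hv1 : v ≤ 1) :
    ((1-a)*(1-u) + a*u) + ((1-a)*(1-v) + a*v) + ((1-b)*(1-u) + b*u)
      + (b*(1-v) + (1-b)*v) ≤ 3 := by
  nlinarith [mul_nonneg ha hu, mul_nonneg ha hv, mul_nonneg hb hu, mul_nonneg hb hv,
    mul_nonneg (sub_nonneg.2 ha1) (sub_nonneg.2 hu1),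
    mul_nonneg (sub_nonneg.2 ha1) (sub_nonneg.2 hv1),
    mul_nonneg (sub_nonneg.2 hb1) (sub_nonneg.2 hu1),
    mul_nonneg (sub_nonneg.2 hb1) (sub_nonneg.2 hv1),
    mul_nonneg ha (sub_nonneg.2 hu1), mul_nonneg hu (sub_nonneg.2 ha1),
    mul_nonneg hb (sub_nonneg.2 hv1), mul_nonneg hv (sub_nonneg.2 hb1)]

lemma chsh_pt (aF aT bF bT uF uT vF vT : ℝ)
    (haF : 0 ≤ aF) (haT : 0 ≤ aT) (hbF : 0 ≤ bF) (hbT : 0 ≤ bT)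
    (huF : 0 ≤ uF) (huT : 0 ≤ uT) (hvF : 0 ≤ vF) (hvT : 0 ≤ vT)
    (ha : aF + aT = 1) (hb : bF + bT = 1) (hu : uF + uT = 1) (hv : vF + vT = 1) :
    (aF*uF + aT*uT) + (aF*vF + aT*vT) + (bF*uF + bT*uT) + (bT*vF + bF*vT) ≤ 3 := by
  have := chsh4 aT bT uT vT haT (by linarith) hbT (by linarith) huT (by linarith)
    hvT (by linarith)
  nlinarith [this]

/-- if a distribution on binary `(C,D,E,F_O)` with all
`P(c,e) > 0` violates the CHSH-type bound, it cannot be written in the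
local form `P(c,d,e,f_O) = ∑_b Q(b)Q(c)Q(d|b,c)Q(e)Q(f_O|b,e)`. -/
theorem stmt_17
    (P : Bool → Bool → Bool → Bool → ℝ)   -- arguments: c d e f₀
    (hpos : ∀ c e, (0:ℝ) < ∑ d, ∑ f₀, P c d e f₀)
    (hviol :
      (∑ x, P false x false x) / (∑ d, ∑ f₀, P false d false f₀) +
      (∑ x, P false x true x) / (∑ d, ∑ f₀, P false d true f₀) +
      (∑ x, P true x false x) / (∑ d, ∑ f₀, P true d false f₀) +
      (∑ x, P true (!x) true x) / (∑ d, ∑ f₀, P true d true f₀) > 3) :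
    ∀ (B : Type) [Fintype B] (μ : B → ℝ) (qC qE : Bool → ℝ)
      (kD kF : B → Bool → Bool → ℝ),
      (∀ b, 0 ≤ μ b) → (∑ b, μ b = 1) →
      (∀ c, 0 < qC c) → (∑ c, qC c = 1) →
      (∀ e, 0 < qE e) → (∑ e, qE e = 1) →
      (∀ b c d, 0 ≤ kD b c d) → (∀ b c, ∑ d, kD b c d = 1) →
      (∀ b e f₀, 0 ≤ kF b e f₀) → (∀ b e, ∑ f₀, kF b e f₀ = 1) →
      ¬ (∀ c d e f₀,
        P c d e f₀ = ∑ b, μ b * qC c * kD b c d * qE e * kF b e f₀) := by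
  intro B _ μ qC qE kD kF hμ hμ1 hqC hqC1 hqE hqE1 hkD hkD1 hkF hkF1 hP
  -- marginal P(c,e) = qC c * qE e
  have hden : ∀ c e, (∑ d, ∑ f₀, P c d e f₀) = qC c * qE e := by
    intro c e
    have hD := hkD1
    have hF := hkF1
    simp only [Fintype.sum_bool] at hD hF ⊢
    rw [hP, hP, hP, hP, ← Finset.sum_add_distrib, ← Finset.sum_add_distrib,
      ← Finset.sum_add_distrib]
    have h1 : ∀ b : B, μ b * qC c * kD b c true * qE e * kF b e true +
        μ b * qC c * kD b c true * qE e * kF b e false +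
        (μ b * qC c * kD b c false * qE e * kF b e true +
        μ b * qC c * kD b c false * qE e * kF b e false)
        = μ b * (qC c * qE e) := by
      intro b
      have h2 := hD b c
      have h3 := hF b e
      linear_combination (μ b * qC c * qE e * (kF b e true + kF b e false)) * h2 +
        (μ b * qC c * qE e) * h3
    calc (∑ b, (μ b * qC c * kD b c true * qE e * kF b e true +
          μ b * qC c * kD b c true * qE e * kF b e false +
          (μ b * qC c * kD b c false * qE e * kF b e true +
          μ b * qC c * kD b c false * qE e * kF b e false)))
        = ∑ b, μ b * (qC c * qE e) := Finset.sum_congr rfl fun b _ => h1 b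
      _ = (∑ b, μ b) * (qC c * qE e) := by rw [Finset.sum_mul]
      _ = qC c * qE e := by rw [hμ1, one_mul]
  -- the "same outcome" numerator
  have hnum : ∀ c e, (∑ x, P c x e x) = qC c * qE e *
      ∑ b, μ b * (kD b c false * kF b e false + kD b c true * kF b e true) := by
    intro c e
    simp only [Fintype.sum_bool]
    rw [hP, hP, ← Finset.sum_add_distrib, Finset.mul_sum]
    exact Finset.sum_congr rfl fun b _ => by ring
  have hnum' : (∑ x, P true (!x) true x) = qC true * qE true *
      ∑ b, μ b * (kD b true true * kF b true false + kD b true false * kF b true true) := by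
    simp only [Fintype.sum_bool, Bool.not_true, Bool.not_false]
    rw [hP, hP, ← Finset.sum_add_distrib, Finset.mul_sum]
    exact Finset.sum_congr rfl fun b _ => by ring
  have hA : ∀ c e, (∑ x, P c x e x) / (∑ d, ∑ f₀, P c d e f₀)
      = ∑ b, μ b * (kD b c false * kF b e false + kD b c true * kF b e true) := by
    intro c e
    rw [hnum, hden]
    exact mul_div_cancel_left₀ _ (ne_of_gt (mul_pos (hqC c) (hqE e)))
  have hA' : (∑ x, P true (!x) true x) / (∑ d, ∑ f₀, P true d true f₀)
      = ∑ b, μ b * (kD b true true * kF b true false + kD b true false * kF b true true) := by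
    rw [hnum', hden]
    exact mul_div_cancel_left₀ _ (ne_of_gt (mul_pos (hqC true) (hqE true)))
  rw [hA false false, hA false true, hA true false, hA'] at hviol
  rw [← Finset.sum_add_distrib, ← Finset.sum_add_distrib, ← Finset.sum_add_distrib]
    at hviol
  have hbound : (∑ b, (μ b * (kD b false false * kF b false false + kD b false true * kF b false true) +
      μ b * (kD b false false * kF b true false + kD b false true * kF b true true) +
      μ b * (kD b true false * kF b false false + kD b true true * kF b false true) +
      μ b * (kD b true true * kF b true false + kD b true false * kF b true true)))
      ≤ 3 := by
    calc _ ≤ ∑ b, μ b * 3 := by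
          apply Finset.sum_le_sum
          intro b _
          have hD0 := hkD1 b false; have hD1 := hkD1 b true
          have hF0 := hkF1 b false; have hF1 := hkF1 b true
          simp only [Fintype.sum_bool] at hD0 hD1 hF0 hF1
          have key := chsh_pt (kD b false false) (kD b false true) (kD b true false)
            (kD b true true) (kF b false false) (kF b false true) (kF b true false)
            (kF b true true) (hkD b false false) (hkD b false true) (hkD b true false)
            (hkD b true true) (hkF b false false) (hkF b false true) (hkF b true false)
            (hkF b true true) (by linarith) (by linarith) (by linarith) (by linarith)
          have hμb := hμ b
          nlinarith [mul_le_mul_of_nonneg_left key hμb]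
      _ = 3 := by rw [← Finset.sum_mul, hμ1, one_mul]
  linarith
end
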